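/- Let q > 3 and α ∈ (0, α*(q)). Define g(t) = ψ(t)²/t^{q-3} on [x₀(α), x₁(α)], where ψ(t) = f'(t)² - 2 f(t) f''(t) and f(t) = t² - 1 - α t^q, and let x̂ be the unique positive critical point of f (the unique positive zero of f'), which lies in (x₀(α), x₁(α)). Then g'(x₀(α)) < 0, g'(x₁(α)) < 0, and g'(x̂) > 0. -/

import Mathlib

/-
f'(t) = t (2 - α q t^(q-2)) vanishes for t > 0 only at x̂ = (2/(αq))^(1/(q-2)), and α < α*(q) is
exactly the condition f(x̂) > 0; by the intermediate value theorem x̂ then lies strictly between the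
extreme positive roots x₀ and x₁.

Since ψ' = -2 f f''', the derivative of g = ψ² t^(3-q) is
  g'(t) = ψ(t) (-4 f(t) t f'''(t) - (q-3) ψ(t)) / t^(q-2).
At a root of f this is -(q-3) f'(t)⁴ / t^(q-2) < 0. At x̂, where f' = 0 and α q x̂^(q-2) = 2,
it is 16 (q-2)² (q+1) f(x̂)² / x̂^(q-2) > 0.
-/

open Set Filter MeasureTheory

noncomputable def fQ (q α t : ℝ) : ℝ := t ^ 2 - 1 - α * t ^ q

noncomputable def alphaStar (q : ℝ) : ℝ := 2 / (q - 2) * ((q - 2) / q) ^ (q / 2)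

noncomputable def x0 (q α : ℝ) : ℝ := sInf {t : ℝ | 0 < t ∧ fQ q α t = 0}

noncomputable def x1 (q α : ℝ) : ℝ := sSup {t : ℝ | 0 < t ∧ fQ q α t = 0}

noncomputable def Iq (q α : ℝ) : ℝ := ∫ t in x0 q α..x1 q α, 1 / Real.sqrt (fQ q α t)

noncomputable def fQd1 (q α t : ℝ) : ℝ := 2 * t - α * q * t ^ (q - 1)

noncomputable def fQd2 (q α t : ℝ) : ℝ := 2 - α * q * (q - 1) * t ^ (q - 2)

noncomputable def fQd3 (q α t : ℝ) : ℝ := -(α * q * (q - 1) * (q - 2) * t ^ (q - 3))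

noncomputable def psiQ (q α t : ℝ) : ℝ := fQd1 q α t ^ 2 - 2 * fQ q α t * fQd2 q α t

noncomputable def critPt (q α : ℝ) : ℝ := (2 / (α * q)) ^ (1 / (q - 2))

noncomputable def gQ (q α t : ℝ) : ℝ := psiQ q α t ^ 2 / t ^ (q - 3)

def rootSet (q α : ℝ) : Set ℝ := {t | 0 < t ∧ fQ q α t = 0}

variable {q α s t : ℝ}

lemma rpow_eq_rpow_sub_mul_pow (ht : t ≠ 0) (r : ℝ) (n : ℕ) : t ^ r = t ^ (r - n) * t ^ n := by
  rw [← Real.rpow_add_natCast ht, sub_add_cancel]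

lemma fQ_eq (ht : 0 < t) : fQ q α t = t ^ 2 * (1 - α * t ^ (q - 2)) - 1 := by
  rw [fQ, rpow_eq_rpow_sub_mul_pow ht.ne' q 2]
  push_cast
  ring

lemma fQd1_eq (ht : 0 < t) : fQd1 q α t = t * (2 - α * q * t ^ (q - 2)) := by
  rw [fQd1, show q - 1 = q - 2 + 1 by ring, Real.rpow_add_one ht.ne']
  ring

lemma mul_fQd3_eq (ht : 0 < t) :
    t * fQd3 q α t = -(α * q * (q - 1) * (q - 2) * t ^ (q - 2)) := by
  rw [fQd3, show q - 2 = q - 3 + 1 by ring, Real.rpow_add_one ht.ne']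
  ring

section Derivatives

lemma hasDerivAt_fQ (ht : t ≠ 0) : HasDerivAt (fQ q α) (fQd1 q α t) t := by
  refine (((hasDerivAt_pow 2 t).sub_const 1).sub
    ((Real.hasDerivAt_rpow_const (p := q) (Or.inl ht)).const_mul α)).congr_deriv ?_
  unfold fQd1
  push_cast
  ring

lemma hasDerivAt_fQd1 (ht : t ≠ 0) : HasDerivAt (fQd1 q α) (fQd2 q α t) t := by
  refine (((hasDerivAt_id t).const_mul 2).sub
    ((Real.hasDerivAt_rpow_const (p := q - 1) (Or.inl ht)).const_mul (α * q))).congr_deriv ?_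
  unfold fQd2
  rw [show q - 1 - 1 = q - 2 by ring]
  ring

lemma hasDerivAt_fQd2 (ht : t ≠ 0) : HasDerivAt (fQd2 q α) (fQd3 q α t) t := by
  refine ((hasDerivAt_const t (2 : ℝ)).sub
    ((Real.hasDerivAt_rpow_const (p := q - 2) (Or.inl ht)).const_mul
      (α * q * (q - 1)))).congr_deriv ?_
  unfold fQd3
  rw [show q - 2 - 1 = q - 3 by ring]
  ring

lemma hasDerivAt_psiQ (ht : t ≠ 0) :
    HasDerivAt (psiQ q α) (-2 * fQ q α t * fQd3 q α t) t := by
  have h := ((hasDerivAt_fQd1 (q := q) (α := α) ht).pow 2).sub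
    (((hasDerivAt_fQ (q := q) (α := α) ht).mul (hasDerivAt_fQd2 (q := q) (α := α) ht)).const_mul 2)
  have hfun : (fQd1 q α ^ 2 - fun s => 2 * (fQ q α * fQd2 q α) s) = psiQ q α := by
    funext s
    simp only [psiQ, Pi.sub_apply, Pi.pow_apply, Pi.mul_apply]
    ring
  rw [hfun] at h
  refine h.congr_deriv ?_
  push_cast
  ring

lemma hasDerivAt_gQ (ht : 0 < t) :
    HasDerivAt (gQ q α)
      (psiQ q α t * (-4 * fQ q α t * (t * fQd3 q α t) - (q - 3) * psiQ q α t) / t ^ (q - 2)) t := by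
  have h : HasDerivAt (gQ q α) _ t := ((hasDerivAt_psiQ ht.ne').pow 2).div
    (Real.hasDerivAt_rpow_const (p := q - 3) (Or.inl ht.ne')) (Real.rpow_pos_of_pos ht _).ne'
  refine h.congr_deriv ?_
  rw [rpow_eq_rpow_sub_mul_pow ht.ne' (q - 2) 2, rpow_eq_rpow_sub_mul_pow ht.ne' (q - 3) 1]
  norm_num [show q - 2 - 2 = q - 4 by ring, show q - 3 - 1 = q - 4 by ring]
  field_simp
  ring

end Derivatives

section CriticalPoint

lemma critPt_pos (hq : 0 < q) (h0 : 0 < α) : 0 < critPt q α := by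
  unfold critPt
  positivity

lemma critPt_rpow (hq : 2 < q) (h0 : 0 < α) : critPt q α ^ (q - 2) = 2 / (α * q) := by
  rw [critPt, one_div, Real.rpow_inv_rpow (by positivity) (by linarith)]

lemma fQd1_eq_zero_iff (hq : 2 < q) (h0 : 0 < α) (ht : 0 < t) :
    fQd1 q α t = 0 ↔ t = critPt q α := by
  rw [fQd1_eq ht, mul_eq_zero, or_iff_right ht.ne', sub_eq_zero]
  constructor
  · intro h
    have hpow : t ^ (q - 2) = 2 / (α * q) := by
      field_simp
      linarith
    rw [critPt, ← hpow, one_div, Real.rpow_rpow_inv ht.le (by linarith)]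
  · rintro rfl
    rw [critPt_rpow hq h0]
    field_simp

lemma psiQ_critPt (hq : 2 < q) (h0 : 0 < α) :
    psiQ q α (critPt q α) = 4 * (q - 2) * fQ q α (critPt q α) := by
  have hd : fQd1 q α (critPt q α) = 0 :=
    (fQd1_eq_zero_iff hq h0 (critPt_pos (by linarith) h0)).2 rfl
  rw [psiQ, hd, fQd2, critPt_rpow hq h0]
  field_simp
  ring

lemma alphaStar_mul_self_mul_rpow (hq : 2 < q) :
    alphaStar q * q * (q / (q - 2)) ^ ((q - 2) / 2) = 2 := by
  have hc : 0 < (q - 2) / q := div_pos (by linarith) (by linarith)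
  have hq2 : q - 2 ≠ 0 := by linarith
  rw [alphaStar, show q / (q - 2) = ((q - 2) / q)⁻¹ by rw [inv_div],
    Real.inv_rpow hc.le, show q / 2 = (q - 2) / 2 + 1 by ring, Real.rpow_add_one hc.ne']
  field_simp

lemma sq_critPt_gt (hq : 2 < q) (h0 : 0 < α) (hα : α < alphaStar q) :
    q / (q - 2) < critPt q α ^ 2 := by
  have hz : 0 < (q - 2) / 2 := by linarith
  have hstar : (q / (q - 2)) ^ ((q - 2) / 2) = 2 / (alphaStar q * q) := by
    rw [eq_div_iff (by nlinarith), mul_comm]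
    exact alphaStar_mul_self_mul_rpow hq
  rw [← Real.rpow_lt_rpow_iff (div_pos (by linarith) (by linarith)).le (sq_nonneg _) hz, hstar,
    ← Real.rpow_natCast, ← Real.rpow_mul (critPt_pos (by linarith) h0).le,
    show ((2 : ℕ) : ℝ) * ((q - 2) / 2) = q - 2 by push_cast; ring, critPt_rpow hq h0]
  gcongr

lemma fQ_critPt_pos (hq : 2 < q) (h0 : 0 < α) (hα : α < alphaStar q) :
    0 < fQ q α (critPt q α) := by
  have hx : 0 < critPt q α := critPt_pos (by linarith) h0
  have hsq := sq_critPt_gt hq h0 hα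
  rw [div_lt_iff₀ (by linarith)] at hsq
  rw [fQ_eq hx, critPt_rpow hq h0]
  field_simp
  nlinarith

end CriticalPoint

section Roots

lemma one_lt_of_fQ_nonneg (h0 : 0 < α) (ht : 0 < t) (hf : 0 ≤ fQ q α t) : 1 < t := by
  have := mul_pos h0 (Real.rpow_pos_of_pos ht q)
  unfold fQ at hf
  nlinarith

lemma fQ_neg_of_le (hq : 2 < q) (h0 : 0 < α) (ht : (1 / α) ^ (1 / (q - 2)) ≤ t) :
    fQ q α t < 0 := by
  have hM : 0 < (1 / α) ^ (1 / (q - 2)) := by positivity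
  have hpow : 1 / α ≤ t ^ (q - 2) := by
    calc 1 / α = ((1 / α) ^ (1 / (q - 2))) ^ (q - 2) := by
          rw [one_div (q - 2), Real.rpow_inv_rpow (by positivity) (by linarith)]
      _ ≤ t ^ (q - 2) := Real.rpow_le_rpow hM.le ht (by linarith)
  rw [div_le_iff₀ h0] at hpow
  rw [fQ_eq (hM.trans_le ht)]
  nlinarith [sq_nonneg t]

lemma continuousOn_fQ : ContinuousOn (fQ q α) (Ioi 0) :=
  fun _ ht => (hasDerivAt_fQ (ne_of_gt ht)).continuousAt.continuousWithinAt

lemma isClosed_rootSet (h0 : 0 < α) : IsClosed (rootSet q α) := by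
  have h : rootSet q α = Ici 1 ∩ fQ q α ⁻¹' {0} := by
    ext t
    refine ⟨fun ⟨ht, hf⟩ => ⟨(one_lt_of_fQ_nonneg h0 ht hf.ge).le, hf⟩,
      fun ⟨ht, hf⟩ => ⟨zero_lt_one.trans_le ht, hf⟩⟩
  have hcont : ContinuousOn (fQ q α) (Ici 1) :=
    continuousOn_fQ.mono (Ici_subset_Ioi.2 zero_lt_one)
  rw [h]
  exact hcont.preimage_isClosed_of_isClosed isClosed_Ici isClosed_singleton

lemma bddAbove_rootSet (hq : 2 < q) (h0 : 0 < α) : BddAbove (rootSet q α) :=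
  ⟨(1 / α) ^ (1 / (q - 2)), fun _ ⟨_, hf⟩ =>
    le_of_not_ge fun h => (fQ_neg_of_le hq h0 h).ne hf⟩

lemma exists_root_mem_Ioo_of_fQ_pos (h0 : 0 < α) (hs : 0 < s) (hf : 0 < fQ q α s) :
    ∃ a ∈ Ioo 0 s, fQ q α a = 0 := by
  have h1 : 1 < s := one_lt_of_fQ_nonneg h0 hs hf.le
  have hf1 : fQ q α 1 < 0 := by simp [fQ, h0]
  obtain ⟨a, ha, hfa⟩ := intermediate_value_Ioo h1.le
    (continuousOn_fQ.mono fun t ht => zero_lt_one.trans_le ht.1) ⟨hf1, hf⟩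
  exact ⟨a, ⟨zero_lt_one.trans ha.1, ha.2⟩, hfa⟩

lemma exists_root_gt_of_fQ_pos (hq : 2 < q) (h0 : 0 < α) (hs : 0 < s) (hf : 0 < fQ q α s) :
    ∃ c, s < c ∧ fQ q α c = 0 := by
  set M := (1 / α) ^ (1 / (q - 2))
  have hsM : s < M := lt_of_not_ge fun h => (fQ_neg_of_le hq h0 h).not_gt hf
  obtain ⟨c, hc, hfc⟩ := intermediate_value_Ioo' hsM.le
    (continuousOn_fQ.mono fun t ht => hs.trans_le ht.1) ⟨fQ_neg_of_le hq h0 le_rfl, hf⟩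
  exact ⟨c, hc.1, hfc⟩

lemma x0_mem_rootSet (h0 : 0 < α) (hne : (rootSet q α).Nonempty) : x0 q α ∈ rootSet q α :=
  (isClosed_rootSet h0).csInf_mem hne ⟨0, fun _ ht => ht.1.le⟩

lemma x1_mem_rootSet (hq : 2 < q) (h0 : 0 < α) (hne : (rootSet q α).Nonempty) :
    x1 q α ∈ rootSet q α :=
  (isClosed_rootSet h0).csSup_mem hne (bddAbove_rootSet hq h0)

lemma mem_Ioo_x0_x1_of_fQ_pos (hq : 2 < q) (h0 : 0 < α) (hs : 0 < s) (hf : 0 < fQ q α s) :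
    s ∈ Ioo (x0 q α) (x1 q α) := by
  obtain ⟨a, ha, hfa⟩ := exists_root_mem_Ioo_of_fQ_pos h0 hs hf
  obtain ⟨c, hc, hfc⟩ := exists_root_gt_of_fQ_pos hq h0 hs hf
  exact ⟨csInf_lt_of_lt (s := rootSet q α) ⟨0, fun _ ht => ht.1.le⟩ ⟨ha.1, hfa⟩ ha.2,
    lt_csSup_of_lt (bddAbove_rootSet hq h0) ⟨hs.trans hc, hfc⟩ hc⟩

end Roots

lemma deriv_gQ_neg_of_fQ_eq_zero (hq : 3 < q) (ht : 0 < t) (hf : fQ q α t = 0)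
    (hd : fQd1 q α t ≠ 0) : deriv (gQ q α) t < 0 := by
  have hψ : psiQ q α t = fQd1 q α t ^ 2 := by
    rw [psiQ, hf]
    ring
  rw [(hasDerivAt_gQ ht).deriv, hf, hψ]
  refine div_neg_of_neg_of_pos ?_ (Real.rpow_pos_of_pos ht _)
  have := pow_pos (pow_pos (sq_pos_of_ne_zero hd) 2) 2
  nlinarith

lemma deriv_gQ_critPt_pos (hq : 2 < q) (h0 : 0 < α) (hf : fQ q α (critPt q α) ≠ 0) :
    0 < deriv (gQ q α) (critPt q α) := by
  have hx : 0 < critPt q α := critPt_pos (by linarith) h0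
  rw [(hasDerivAt_gQ hx).deriv, psiQ_critPt hq h0, mul_fQd3_eq hx, critPt_rpow hq h0]
  have hnum : 4 * (q - 2) * fQ q α (critPt q α) * (-4 * fQ q α (critPt q α) *
      -(α * q * (q - 1) * (q - 2) * (2 / (α * q))) - (q - 3) * (4 * (q - 2) * fQ q α (critPt q α)))
      = 16 * (q - 2) ^ 2 * (q + 1) * fQ q α (critPt q α) ^ 2 := by
    field_simp
    ring
  rw [hnum]
  exact div_pos (mul_pos (mul_pos (mul_pos (by norm_num) (pow_pos (sub_pos.2 hq) 2)) (by linarith))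
    (sq_pos_of_ne_zero hf)) (by positivity)

/-- for q > 3, with g = ψ²/t^{q-3} and x̂ the unique positive zero of f'
(which lies in (x₀, x₁)): g'(x₀) < 0, g'(x₁) < 0 and g'(x̂) > 0. -/
theorem stmt_9 (q α : ℝ) (hq : 3 < q) (hα : α ∈ Ioo (0 : ℝ) (alphaStar q)) :
    let g : ℝ → ℝ := fun t => psiQ q α t ^ 2 / t ^ (q - 3)
    let xhat : ℝ := (2 / (α * q)) ^ (1 / (q - 2))
    fQd1 q α xhat = 0 ∧ (∀ t, 0 < t → fQd1 q α t = 0 → t = xhat) ∧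
    xhat ∈ Ioo (x0 q α) (x1 q α) ∧
    deriv g (x0 q α) < 0 ∧ deriv g (x1 q α) < 0 ∧ 0 < deriv g xhat := by
  intro g xhat
  obtain ⟨h0, hα⟩ := hα
  have hq2 : 2 < q := by linarith
  have hx : 0 < critPt q α := critPt_pos (by linarith) h0
  have hf := fQ_critPt_pos hq2 h0 hα
  have hcrit : ∀ t, 0 < t → fQd1 q α t = 0 → t = critPt q α :=
    fun t ht => (fQd1_eq_zero_iff hq2 h0 ht).1
  have hmem := mem_Ioo_x0_x1_of_fQ_pos hq2 h0 hx hf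
  obtain ⟨a, ha, hfa⟩ := exists_root_mem_Ioo_of_fQ_pos h0 hx hf
  have hne : (rootSet q α).Nonempty := ⟨a, ha.1, hfa⟩
  obtain ⟨hx0, hfx0⟩ := x0_mem_rootSet h0 hne
  obtain ⟨hx1, hfx1⟩ := x1_mem_rootSet hq2 h0 hne
  refine ⟨(fQd1_eq_zero_iff hq2 h0 hx).2 rfl, hcrit, hmem, ?_, ?_,
    deriv_gQ_critPt_pos hq2 h0 hf.ne'⟩
  · exact deriv_gQ_neg_of_fQ_eq_zero hq hx0 hfx0 fun h => hmem.1.ne (hcrit _ hx0 h)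
  · exact deriv_gQ_neg_of_fQ_eq_zero hq hx1 hfx1 fun h => hmem.2.ne' (hcrit _ hx1 h)
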